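/- For every i ∈ I and every λ ∈ V such that B(λ, α_j) ∈ [d_j]_q·R for all j ∈ I, one also has B(T_i λ, α_j) ∈ [d_j]_q·R for all j ∈ I. (Equivalently, each operator T_i preserves the R-span of the deformed fundamental weights.) -/
import Mathlib


noncomputable section

open scoped BigOperators

/-- The field `K = ℚ(q,t)` of rational functions in two variables over `ℚ`. -/
abbrev KK : Type := FractionRing (MvPolynomial (Fin 2) ℚ)

/-- The variable `q` of `ℚ(q,t)`. -/
def qv : KK := algebraMap (MvPolynomial (Fin 2) ℚ) KK (MvPolynomial.X 0)

/-- The variable `t` of `ℚ(q,t)`. -/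
def tv : KK := algebraMap (MvPolynomial (Fin 2) ℚ) KK (MvPolynomial.X 1)

/-- The quantum integer `[k]_q = (q^k - q^{-k})/(q - q⁻¹)` in `ℚ(q,t)`. -/
def qint (k : ℤ) : KK := (qv ^ k - qv ^ (-k)) / (qv - qv⁻¹)

variable {I : Type}

/-- The `(q,t)`-deformed Cartan matrix `C(q,t)`:
`C_{ii} = q^{d_i} t⁻¹ + q^{-d_i} t` and `C_{ij} = [c_{ij}]_q` for `i ≠ j`. -/
def Cqt [DecidableEq I] (c : I → I → ℤ) (d : I → ℤ) (i j : I) : KK :=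
  if i = j then qv ^ (d i) * tv⁻¹ + qv ^ (-(d i)) * tv else qint (c i j)

/-- The basis vector `α_i` of `V = K^{⊕I}`. -/
def alphaK [DecidableEq I] (i : I) : I → KK := Pi.single i 1

/-- The deformed bilinear form `B` on `V`, determined by
`B(α_i, α_j) = [d_i]_q C_{ij}(q,t)`. -/
def Bform [Fintype I] [DecidableEq I] (c : I → I → ℤ) (d : I → ℤ)
    (lam mu : I → KK) : KK :=
  ∑ i, ∑ j, lam i * mu j * (qint (d i) * Cqt c d i j)

/-- The operator `T_i : V → V`, `T_i(λ) = λ - (q^{-d_i} t/[d_i]_q)·B(α_i, λ)·α_i`. -/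
def Trefl [Fintype I] [DecidableEq I] (c : I → I → ℤ) (d : I → ℤ) (i : I)
    (lam : I → KK) : I → KK :=
  fun k => lam k - (qv ^ (-(d i)) * tv / qint (d i)) * Bform c d (alphaK i) lam * alphaK i k

/-- The subring `R = ℤ[q⁻¹, t]` of `K`, generated by `ℤ`, `q⁻¹` and `t`. -/
def Rring : Subring KK := Subring.closure {qv⁻¹, tv}


lemma hq0 : qv ≠ 0 := by
  simp only [qv]
  exact fun h => MvPolynomial.X_ne_zero 0 ((IsFractionRing.injective (MvPolynomial (Fin 2) ℚ) KK) (by simp [h]))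

lemma ht0 : tv ≠ 0 := by
  simp only [tv]
  exact fun h => MvPolynomial.X_ne_zero 1 ((IsFractionRing.injective (MvPolynomial (Fin 2) ℚ) KK) (by simp [h]))

lemma hqpown (n : ℕ) (h : qv ^ n = 1) : n = 0 := by
  by_contra hn
  have h2 : (algebraMap (MvPolynomial (Fin 2) ℚ) KK) ((MvPolynomial.X 0) ^ n) =
      (algebraMap (MvPolynomial (Fin 2) ℚ) KK) 1 := by
    rw [map_pow, map_one]; exact h
  have h3 : (MvPolynomial.X (0 : Fin 2) : MvPolynomial (Fin 2) ℚ) ^ n = 1 :=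
    IsFractionRing.injective (MvPolynomial (Fin 2) ℚ) KK h2
  have := congrArg (MvPolynomial.eval (fun _ => (0:ℚ))) h3
  simp [zero_pow hn] at this

lemma hqz (k : ℤ) (h : qv ^ k = 1) : k = 0 := by
  rcases k with n | n
  · simp only [Int.ofNat_eq_coe, zpow_natCast] at h
    simp [hqpown n h]
  · exfalso
    have : qv ^ (n+1) = 1 := by
      have h' : (qv ^ (n+1) : KK)⁻¹ = 1 := by
        rw [← zpow_natCast, ← zpow_neg]; exact_mod_cast h
      simpa using inv_eq_one.mp h'
    simpa using hqpown (n+1) this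

lemma hqsub : qv - qv⁻¹ ≠ 0 := by
  intro h
  have h2 : qv * qv - 1 = 0 := by
    have := congrArg (fun x => x * qv) h
    simp only [sub_mul, inv_mul_cancel₀ hq0, zero_mul] at this
    linear_combination this
  have : qv ^ (2:ℤ) = 1 := by
    rw [show (2:ℤ) = (2:ℕ) by norm_num, zpow_natCast]
    linear_combination h2
  simpa using hqz 2 this

lemma qint_ne_zero {k : ℤ} (hk : k ≠ 0) : qint k ≠ 0 := by
  intro h
  rw [qint, div_eq_zero_iff] at h
  rcases h with h | h
  · have hnum : qv ^ k = qv ^ (-k) := by linear_combination h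
    have : qv ^ (2 * k) = 1 := by
      rw [two_mul, zpow_add₀ hq0]
      nth_rewrite 2 [hnum]
      rw [← zpow_add₀ hq0]
      simp
    have := hqz _ this
    omega
  · exact hqsub h

lemma qint_neg (k : ℤ) : qint (-k) = - qint k := by
  simp only [qint, neg_neg]; ring

lemma qint_one : qint 1 = 1 := by
  simp only [qint, zpow_one, zpow_neg]
  exact div_self hqsub

lemma qint_zero : qint 0 = 0 := by simp [qint]

lemma qinv_mem : qv⁻¹ ∈ Rring := Subring.subset_closure (Or.inl rfl)
lemma tv_mem : tv ∈ Rring := Subring.subset_closure (Or.inr rfl)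

lemma qzpow_mem {e : ℤ} (he : e ≤ 0) : qv ^ e ∈ Rring := by
  have : qv ^ e = (qv⁻¹) ^ (-e).toNat := by
    rw [inv_pow, ← zpow_natCast, Int.toNat_of_nonneg (by omega), ← zpow_neg]
    congr 1; omega
  rw [this]
  exact pow_mem qinv_mem _

lemma qint_rec (k : ℤ) : qint (k+1) = qv * qint k + qv ^ (-k) := by
  have h1 : qv ^ (k+1) = qv ^ k * qv := by rw [zpow_add_one₀ hq0]
  have h2 : qv ^ (-(k+1)) = qv ^ (-k) * qv⁻¹ := by
    rw [show -(k+1) = -k + (-1) by ring, zpow_add₀ hq0, zpow_neg_one]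
  rw [qint, qint, h1, h2, mul_div_assoc', div_add' _ _ _ hqsub, div_eq_div_iff hqsub hqsub]
  ring

lemma qint_mem (n : ℕ) : ∃ S ∈ Rring, qint n = qv ^ ((n:ℤ)-1) * S := by
  induction n with
  | zero => exact ⟨0, zero_mem _, by simp [qint_zero]⟩
  | succ m ih =>
    obtain ⟨S, hS, hq⟩ := ih
    refine ⟨S + (qv⁻¹)^(2*m), add_mem hS (pow_mem qinv_mem _), ?_⟩
    have hrec : qint ((m:ℤ)+1) = qv * qint m + qv ^ (-(m:ℤ)) := qint_rec m
    have hcast : ((m+1:ℕ):ℤ) = (m:ℤ)+1 := by push_cast; ring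
    rw [hcast, hrec, hq]
    have e1 : qv * qv ^ ((m:ℤ)-1) = qv ^ ((m:ℤ)) := by
      rw [mul_comm, ← zpow_add_one₀ hq0]; congr 1; ring
    have e2 : qv ^ ((m:ℤ)) * (qv⁻¹)^(2*m) = qv ^ (-(m:ℤ)) := by
      rw [inv_pow, ← zpow_natCast qv (2*m), ← zpow_neg, ← zpow_add₀ hq0]
      congr 1; push_cast; ring
    have e3 : qv ^ ((m:ℤ)+1-1) = qv ^ ((m:ℤ)) := by norm_num
    rw [e3, mul_add, e2, ← e1]
    ring

lemma mem_key (n : ℕ) (e : ℤ) (he : (n:ℤ) - 1 ≤ e) : qv ^ (-e) * qint n ∈ Rring := by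
  obtain ⟨S, hS, hq⟩ := qint_mem n
  rw [hq, ← mul_assoc, ← zpow_add₀ hq0]
  exact mul_mem (qzpow_mem (by omega)) hS

lemma Bform_right_alpha [Fintype I] [DecidableEq I] (c : I → I → ℤ) (d : I → ℤ)
    (lam : I → KK) (j : I) :
    Bform c d lam (alphaK j) = ∑ i, lam i * (qint (d i) * Cqt c d i j) := by
  unfold Bform alphaK
  refine Finset.sum_congr rfl fun i _ => ?_
  rw [Finset.sum_eq_single j]
  · simp
  · intro k _ hk; simp [Pi.single_eq_of_ne hk]
  · intro h; exact absurd (Finset.mem_univ j) h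

lemma Bform_left_alpha [Fintype I] [DecidableEq I] (c : I → I → ℤ) (d : I → ℤ)
    (lam : I → KK) (i : I) :
    Bform c d (alphaK i) lam = ∑ k, lam k * (qint (d i) * Cqt c d i k) := by
  unfold Bform alphaK
  rw [Finset.sum_eq_single i]
  · refine Finset.sum_congr rfl fun k _ => ?_
    simp only [Pi.single_eq_same]; ring
  · intro b _ hb
    simp [Pi.single_eq_of_ne hb]
  · intro h; exact absurd (Finset.mem_univ i) h

lemma Bform_sub_smul [Fintype I] [DecidableEq I] (c : I → I → ℤ) (d : I → ℤ)
    (f g mu : I → KK) (a : KK) :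
    Bform c d (fun k => f k - a * g k) mu = Bform c d f mu - a * Bform c d g mu := by
  unfold Bform
  rw [Finset.mul_sum, ← Finset.sum_sub_distrib]
  refine Finset.sum_congr rfl fun i _ => ?_
  rw [Finset.mul_sum, ← Finset.sum_sub_distrib]
  refine Finset.sum_congr rfl fun j _ => ?_
  ring

lemma sym_lemma [DecidableEq I] (c : I → I → ℤ) (d : I → ℤ) (r : ℤ)
    (hdpos : ∀ i, 0 < d i) (hsymm : ∀ i j, d i * c i j = d j * c j i)
    (honer : ∀ i, d i = 1 ∨ d i = r) (hrmax : ∀ i, d i ≤ r)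
    (hbmax : ∀ i j, i ≠ j → c i j ≠ 0 → d i * c i j = -(max (d i) (d j)))
    (i j : I) : qint (d i) * Cqt c d i j = qint (d j) * Cqt c d j i := by
  by_cases hij : i = j
  · subst hij; rfl
  · rw [Cqt, if_neg hij, Cqt, if_neg (Ne.symm hij)]
    by_cases hc : c i j = 0
    · have hc' : c j i = 0 := by
        have h1 := hsymm i j
        have h2 := hdpos j
        rw [hc, mul_zero] at h1
        exact (mul_eq_zero.mp h1.symm).resolve_left (by omega)
      rw [hc, hc', qint_zero, mul_zero, mul_zero]
    · have hc' : c j i ≠ 0 := by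
        intro h
        have h1 := hsymm i j
        have h2 := hdpos i
        rw [h, mul_zero] at h1
        exact hc ((mul_eq_zero.mp h1).resolve_left (by omega))
      by_cases hd : d i = d j
      · have hcc : c i j = c j i := by
          have h1 := hsymm i j
          rw [hd] at h1
          exact mul_left_cancel₀ (by have := hdpos j; omega) h1
        rw [hcc, hd]
      · rcases honer i with h1 | h1 <;> rcases honer j with h2 | h2
        · exact absurd (h1.trans h2.symm) hd
        · have hr : 0 < r := h2 ▸ hdpos j
          have e1 : c i j = -r := by
            have hb := hbmax i j hij hc
            have := hrmax i; have := hdpos i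
            rw [h1, h2] at hb; omega
          have e2 : c j i = -1 := by
            have hb := hbmax j i (Ne.symm hij) hc'
            have := hrmax i; have := hdpos i
            rw [h2, h1] at hb
            have hmax : max r 1 = r := by omega
            rw [hmax] at hb
            nlinarith [hb]
          rw [e1, e2, h1, h2, qint_neg, qint_neg, qint_one]; ring
        · have hr : 0 < r := h1 ▸ hdpos i
          have e1 : c j i = -r := by
            have hb := hbmax j i (Ne.symm hij) hc'
            have := hrmax j; have := hdpos j
            rw [h1, h2] at hb; omega
          have e2 : c i j = -1 := by
            have hb := hbmax i j hij hc
            have := hrmax j; have := hdpos j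
            rw [h2, h1] at hb
            have hmax : max r 1 = r := by omega
            rw [hmax] at hb
            nlinarith [hb]
          rw [e1, e2, h1, h2, qint_neg, qint_neg, qint_one]; ring
        · exact absurd (h1.trans h2.symm) hd

lemma cmem_lemma [DecidableEq I] (c : I → I → ℤ) (d : I → ℤ) (r : ℤ)
    (hoff : ∀ i j, i ≠ j → c i j ≤ 0)
    (hdpos : ∀ i, 0 < d i)
    (honer : ∀ i, d i = 1 ∨ d i = r) (hrmax : ∀ i, d i ≤ r)
    (hbmax : ∀ i j, i ≠ j → c i j ≠ 0 → d i * c i j = -(max (d i) (d j)))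
    (i j : I) : qv ^ (-(d i)) * tv * Cqt c d j i ∈ Rring := by
  by_cases hij : j = i
  · subst hij
    rw [Cqt, if_pos rfl]
    have e : qv ^ (-(d j)) * qv ^ (d j) = 1 := by
      rw [← zpow_add₀ hq0]; simp
    have e2 : qv ^ (-(d j)) * qv ^ (-(d j)) = qv ^ (-(2*d j)) := by
      rw [← zpow_add₀ hq0]; congr 1; ring
    have e3 : tv * tv⁻¹ = 1 := mul_inv_cancel₀ ht0
    have key : qv ^ (-(d j)) * tv * (qv ^ (d j) * tv⁻¹ + qv ^ (-(d j)) * tv)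
        = 1 + qv ^ (-(2 * d j)) * tv^2 := by
      linear_combination (tv * tv⁻¹) * e + e3 + tv^2 * e2
    rw [key]
    exact add_mem (one_mem _)
      (mul_mem (qzpow_mem (by have := hdpos j; omega)) (pow_mem tv_mem 2))
  · rw [Cqt, if_neg hij]
    by_cases hc : c j i = 0
    · rw [hc, qint_zero, mul_zero]; exact zero_mem _
    · have hneg : c j i < 0 := lt_of_le_of_ne (hoff j i hij) hc
      set m : ℕ := (-(c j i)).toNat with hm
      have hmz : (m:ℤ) = -(c j i) := Int.toNat_of_nonneg (by omega)
      have hbound : (m:ℤ) - 1 ≤ d i := by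
        have hb := hbmax j i hij hc
        rcases honer j with h2 | h2
        · have := hdpos i
          rw [h2] at hb
          omega
        · have hr : 0 < r := h2 ▸ hdpos j
          have hmax : max (d j) (d i) = r := by rw [h2]; exact max_eq_left (hrmax i)
          rw [hmax, h2] at hb
          have hcj : c j i = -1 := by nlinarith [hb]
          have := hdpos i; omega
      have hqeq : qint (c j i) = - qint (m:ℤ) := by
        rw [show (c j i) = -(m:ℤ) by omega, qint_neg]
      rw [hqeq]
      have hmem := mem_key m (d i) hbound
      have heq : qv ^ (-(d i)) * tv * (-(qint (m:ℤ))) = -(tv * (qv ^ (-(d i)) * qint (m:ℤ))) := by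
        ring
      rw [heq]
      exact neg_mem (mul_mem tv_mem hmem)

theorem statement_1
    {I : Type} [Fintype I] [DecidableEq I] [Nonempty I]
    (c : I → I → ℤ) (d : I → ℤ) (r : ℤ)
    -- `C` is a symmetrizable generalized Cartan matrix
    (hdiag : ∀ i, c i i = 2)
    (hoff : ∀ i j, i ≠ j → c i j ≤ 0)
    -- `(d_i)` are positive integers with gcd 1 symmetrizing `C`
    (hdpos : ∀ i, 0 < d i)
    (hgcd : Finset.univ.gcd d = 1)
    (hsymm : ∀ i j, d i * c i j = d j * c j i)
    -- each `d_i ∈ {1, r}` where `r = max_i d_i`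
    (honer : ∀ i, d i = 1 ∨ d i = r)
    (hrmax : ∀ i, d i ≤ r)
    (hrmem : ∃ i, d i = r)
    -- `d_i c_{ij} = -max(d_i, d_j)` whenever `i ≠ j` and `c_{ij} ≠ 0`
    (hbmax : ∀ i j, i ≠ j → c i j ≠ 0 → d i * c i j = -(max (d i) (d j)))
    :
    ∀ (i : I) (lam : I → KK),
      (∀ j, ∃ x ∈ Rring, Bform c d lam (alphaK j) = qint (d j) * x) →
      ∀ j, ∃ x ∈ Rring, Bform c d (Trefl c d i lam) (alphaK j) = qint (d j) * x
    := by
  intro i lam h j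
  obtain ⟨xi, hxiR, hxi⟩ := h i
  obtain ⟨xj, hxjR, hxj⟩ := h j
  have hDi : qint (d i) ≠ 0 := qint_ne_zero (by have := hdpos i; omega)
  have hsym := sym_lemma c d r hdpos hsymm honer hrmax hbmax
  -- B(α_i, λ) = B(λ, α_i) = [d_i] x_i
  have hBil : Bform c d (alphaK i) lam = qint (d i) * xi := by
    rw [Bform_left_alpha]
    have : ∑ k, lam k * (qint (d i) * Cqt c d i k)
        = ∑ k, lam k * (qint (d k) * Cqt c d k i) :=
      Finset.sum_congr rfl fun k _ => by rw [hsym i k]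
    rw [this, ← Bform_right_alpha, hxi]
  -- B(α_i, α_j) = [d_j] C_{ji}
  have hBij : Bform c d (alphaK i) (alphaK j) = qint (d j) * Cqt c d j i := by
    rw [Bform_left_alpha]
    rw [Finset.sum_eq_single j]
    · rw [alphaK, Pi.single_eq_same, one_mul, hsym i j]
    · intro b _ hb; simp [alphaK, Pi.single_eq_of_ne hb]
    · intro hmem; exact absurd (Finset.mem_univ j) hmem
  have hy : qv ^ (-(d i)) * tv * Cqt c d j i ∈ Rring :=
    cmem_lemma c d r hoff hdpos honer hrmax hbmax i j
  refine ⟨xj - xi * (qv ^ (-(d i)) * tv * Cqt c d j i),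
    sub_mem hxjR (mul_mem hxiR hy), ?_⟩
  have hT : Bform c d (Trefl c d i lam) (alphaK j)
      = Bform c d lam (alphaK j)
        - ((qv ^ (-(d i)) * tv / qint (d i)) * Bform c d (alphaK i) lam)
            * Bform c d (alphaK i) (alphaK j) :=
    Bform_sub_smul c d lam (alphaK i) (alphaK j) _
  rw [hT, hxj, hBil, hBij]
  have hcancel : qv ^ (-(d i)) * tv / qint (d i) * (qint (d i) * xi)
      = qv ^ (-(d i)) * tv * xi := by
    have hA : (qv:KK) ^ (d i) ≠ 0 := zpow_ne_zero _ hq0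
    field_simp
  rw [hcancel]
  ring
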